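/- Let v₁,…,vₙ (counterclockwise, at height one) span a convex polygon P, r > 0, and let b be in the relative interior of rP (viewed in the hyperplane of height r). Define ℓⁱ(b) = det(vᵢ₋₁,vᵢ,vᵢ₊₁)/(det(b,vᵢ₋₁,vᵢ)·det(b,vᵢ,vᵢ₊₁)) (indices mod n) and V(b) = Σᵢ ℓⁱ(b). Then the point σ(b) with coordinates σⁱ(b) = (r/V(b))·ℓⁱ(b) satisfies π(σ(b)) = b (where π(φ) = Σᵢφⁱvᵢ), and the quadratic Q(φ) = Σ_{j<k} det(b,vⱼ,v_k)φʲφᵏ attains the value Q(σ(b)) = r/V(b) there. -/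

import Mathlib

/-- The determinant of the 3×3 matrix with columns `a`, `b`, `c`. -/
noncomputable def det3 (a b c : Fin 3 → ℝ) : ℝ :=
  Matrix.det (Matrix.of fun i j => ![a, b, c] j i)

/-!
For `b` at height `r` and `y, z, w` at height one,
`r·det(y,z,w)·z = det(y,z,w)·b + det(b,y,z)·(z - w) - det(b,z,w)·(y - z)`.
Divided by `det(b,vᵢ₋₁,vᵢ)·det(b,vᵢ,vᵢ₊₁)` this reads `r ℓⁱ vᵢ = ℓⁱ b + Eᵢ₊₁ - Eᵢ` with
`Eᵢ = (vᵢ₋₁ - vᵢ) / det(b,vᵢ₋₁,vᵢ)`. Summed over all `i` the `E` telescope away, which gives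
`π(σ) = b`. Summed over `j < k` they leave `E_k - E_0`, and `det(b,E_k,v_k) = 1`, so writing
`Q(σ) = Σ_k σᵏ det(b, Σ_{j<k} σʲ vⱼ, v_k)` every inner term becomes `(1 - det(b,E_0,v_k)) / V`;
summing against `σᵏ` and using `π(σ) = b` once more leaves `r / V`.
-/

open Finset Matrix

lemma det3_eq_dotProduct_cross (a b c : Fin 3 → ℝ) : det3 a b c = a ⬝ᵥ b ⨯₃ c := by
  rw [triple_product_eq_det, det3, ← det_transpose]
  rfl

lemma det3_eq_dotProduct_cross_mid (a b c : Fin 3 → ℝ) : det3 a b c = b ⬝ᵥ c ⨯₃ a := by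
  rw [det3_eq_dotProduct_cross, triple_product_permutation]

lemma det3_eq_dotProduct_cross_right (a b c : Fin 3 → ℝ) : det3 a b c = c ⬝ᵥ a ⨯₃ b := by
  rw [det3_eq_dotProduct_cross, triple_product_permutation, triple_product_permutation]

lemma det3_rotate (a b c : Fin 3 → ℝ) : det3 a b c = det3 b c a := by
  rw [det3_eq_dotProduct_cross, det3_eq_dotProduct_cross, triple_product_permutation]

lemma det3_self_left (a c : Fin 3 → ℝ) : det3 a a c = 0 := by
  rw [det3_eq_dotProduct_cross, dot_self_cross]

lemma det3_self_right (a b : Fin 3 → ℝ) : det3 a b b = 0 := by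
  rw [det3_eq_dotProduct_cross_mid, dot_self_cross]

lemma det3_self_outer (a b : Fin 3 → ℝ) : det3 a b a = 0 := by
  rw [det3_rotate, det3_self_right]

lemma det3_smul_mid (a b c : Fin 3 → ℝ) (t : ℝ) : det3 a (t • b) c = t * det3 a b c := by
  simp only [det3_eq_dotProduct_cross_mid, smul_dotProduct, smul_eq_mul]

lemma det3_add_mid (a b b' c : Fin 3 → ℝ) : det3 a (b + b') c = det3 a b c + det3 a b' c := by
  simp only [det3_eq_dotProduct_cross_mid, add_dotProduct]

lemma det3_sub_mid (a b b' c : Fin 3 → ℝ) : det3 a (b - b') c = det3 a b c - det3 a b' c := by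
  simp only [det3_eq_dotProduct_cross_mid, sub_dotProduct]

lemma det3_sum_smul_mid {ι : Type*} (s : Finset ι) (f : ι → ℝ) (w : ι → Fin 3 → ℝ)
    (a c : Fin 3 → ℝ) : det3 a (∑ i ∈ s, f i • w i) c = ∑ i ∈ s, f i * det3 a (w i) c := by
  simp only [det3_eq_dotProduct_cross_mid, sum_dotProduct, smul_dotProduct, smul_eq_mul]

lemma det3_sum_smul_right {ι : Type*} (s : Finset ι) (f : ι → ℝ) (w : ι → Fin 3 → ℝ)
    (a b : Fin 3 → ℝ) : det3 a b (∑ i ∈ s, f i • w i) = ∑ i ∈ s, f i * det3 a b (w i) := by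
  simp only [det3_eq_dotProduct_cross_right, sum_dotProduct, smul_dotProduct, smul_eq_mul]

lemma height_smul_eq {x y z w : Fin 3 → ℝ} (hy : y 2 = 1) (hz : z 2 = 1) (hw : w 2 = 1) :
    (x 2 * det3 y z w) • z
      = det3 y z w • x + det3 x y z • (z - w) - det3 x z w • (y - z) := by
  ext c
  fin_cases c <;> simp [det3, det_fin_three, hy, hz, hw] <;> ring

lemma Fin.sum_Iio_sub {M : Type*} [AddCommGroup M] {n : ℕ} [NeZero n] (f : Fin n → M)
    (k : Fin n) : ∑ j ∈ Iio k, (f (j + 1) - f j) = f k - f 0 := by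
  obtain ⟨m, rfl⟩ : ∃ m, n = m + 1 := ⟨n - 1, (Nat.succ_pred_eq_of_ne_zero (NeZero.ne n)).symm⟩
  induction k using Fin.induction with
  | zero => rw [Iio_eq_empty.mpr fun j _ => Fin.zero_le j, sum_empty, sub_self]
  | succ i ih =>
    have hIio : Iio i.succ = insert i.castSucc (Iio i.castSucc) := by
      rw [Finset.Iio_insert]
      ext j
      simp [Fin.le_castSucc_iff]
    rw [hIio, sum_insert notMem_Iio_self, ih, Fin.coeSucc_eq_succ]
    abel

lemma det3_pred_self_succ_pos {n : ℕ} [NeZero n] (hn : 3 ≤ n) {v : Fin n → Fin 3 → ℝ}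
    (hccw : ∀ i j k : Fin n, i < j → j < k → 0 < det3 (v i) (v j) (v k)) (i : Fin n) :
    0 < det3 (v (i - 1)) (v i) (v (i + 1)) := by
  -- `(i - 1, i, i + 1)` is a cyclic rotation of an increasing triple; only at `i = 0` and
  -- `i = last` does the rotation differ from the identity.
  obtain ⟨m, rfl⟩ : ∃ m, n = m + 1 := ⟨n - 1, by omega⟩
  have val_sub_one (j : Fin (m + 1)) (hj : j ≠ 0) : ((j - 1 : Fin (m + 1)) : ℕ) = j - 1 := by
    rw [Fin.coe_sub_one, if_neg hj]
  have val_add_one (j : Fin (m + 1)) (hj : j ≠ Fin.last m) :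
      ((j + 1 : Fin (m + 1)) : ℕ) = j + 1 :=
    Fin.val_add_one_of_lt' (by have := Fin.val_lt_last hj; omega)
  rcases eq_or_ne i 0 with rfl | h0
  · have h1 := val_add_one 0 (by simp [Fin.ext_iff]; omega)
    have hl : ((0 - 1 : Fin (m + 1)) : ℕ) = m := by simp
    rw [det3_rotate]
    refine hccw _ _ _ ?_ ?_ <;> rw [Fin.lt_def] <;> simp only [h1, hl, Fin.val_zero] <;> omega
  rcases eq_or_ne i (Fin.last m) with rfl | hlast
  · have h1 := val_sub_one (Fin.last m) (by simp [Fin.ext_iff]; omega)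
    rw [← det3_rotate, Fin.last_add_one]
    refine hccw _ _ _ ?_ ?_ <;> rw [Fin.lt_def] <;>
      simp only [h1, Fin.val_zero, Fin.val_last] <;> omega
  · have h1 := val_sub_one i h0
    have h2 := val_add_one i hlast
    have : (i : ℕ) ≠ 0 := fun h => h0 (Fin.ext h)
    refine hccw _ _ _ ?_ ?_ <;> rw [Fin.lt_def] <;> simp only [h1, h2] <;> omega

lemma sum_Ioi_det3_mul_mul {n : ℕ} (v : Fin n → Fin 3 → ℝ) (b : Fin 3 → ℝ) (φ : Fin n → ℝ) :
    ∑ j, ∑ k ∈ Ioi j, det3 b (v j) (v k) * φ j * φ k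
      = ∑ k, φ k * det3 b (∑ j ∈ Iio k, φ j • v j) (v k) := by
  rw [sum_comm' (t' := univ) (s' := fun k => Iio k) (by simp)]
  refine sum_congr rfl fun k _ => ?_
  rw [det3_sum_smul_mid, mul_sum]
  exact sum_congr rfl fun j _ => by ring

section VertexWeight

variable {n : ℕ} [NeZero n] {v : Fin n → Fin 3 → ℝ} {b : Fin 3 → ℝ}

noncomputable def vertexWeight (v : Fin n → Fin 3 → ℝ) (b : Fin 3 → ℝ) (i : Fin n) : ℝ :=
  det3 (v (i - 1)) (v i) (v (i + 1)) / (det3 b (v (i - 1)) (v i) * det3 b (v i) (v (i + 1)))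

noncomputable def inEdge (v : Fin n → Fin 3 → ℝ) (b : Fin 3 → ℝ) (i : Fin n) : Fin 3 → ℝ :=
  (det3 b (v (i - 1)) (v i))⁻¹ • (v (i - 1) - v i)

lemma det3_pred_ne_zero (hb : ∀ i, det3 b (v i) (v (i + 1)) ≠ 0) (i : Fin n) :
    det3 b (v (i - 1)) (v i) ≠ 0 := by
  simpa using hb (i - 1)

lemma vertexWeight_pos (hn : 3 ≤ n)
    (hccw : ∀ i j k : Fin n, i < j → j < k → 0 < det3 (v i) (v j) (v k))
    (hb : ∀ i, 0 < det3 b (v i) (v (i + 1))) (i : Fin n) : 0 < vertexWeight v b i :=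
  div_pos (det3_pred_self_succ_pos hn hccw i) (mul_pos (by simpa using hb (i - 1)) (hb i))

lemma smul_vertexWeight_smul_eq (hv : ∀ i, v i 2 = 1)
    (hb : ∀ i, det3 b (v i) (v (i + 1)) ≠ 0) (i : Fin n) :
    b 2 • vertexWeight v b i • v i
      = vertexWeight v b i • b + (inEdge v b (i + 1) - inEdge v b i) := by
  have key := height_smul_eq (x := b) (hv (i - 1)) (hv i) (hv (i + 1))
  have h₁ := det3_pred_ne_zero hb i
  have h₂ := hb i
  ext c
  have key_c := congrFun key c
  simp only [vertexWeight, inEdge, add_sub_cancel_right, Pi.smul_apply, Pi.add_apply,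
    Pi.sub_apply, smul_eq_mul] at key_c ⊢
  field_simp
  linear_combination key_c

lemma smul_sum_vertexWeight_smul (hv : ∀ i, v i 2 = 1)
    (hb : ∀ i, det3 b (v i) (v (i + 1)) ≠ 0) :
    b 2 • ∑ i, vertexWeight v b i • v i = (∑ i, vertexWeight v b i) • b := by
  have telescope : ∑ i, (inEdge v b (i + 1) - inEdge v b i) = 0 := by
    rw [sum_sub_distrib, sub_eq_zero]
    exact Fintype.sum_equiv (Equiv.addRight 1) _ _ fun _ => rfl
  rw [smul_sum, sum_congr rfl fun i _ => smul_vertexWeight_smul_eq hv hb i,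
    sum_add_distrib, telescope, add_zero, sum_smul]

lemma smul_sum_Iio_vertexWeight_smul (hv : ∀ i, v i 2 = 1)
    (hb : ∀ i, det3 b (v i) (v (i + 1)) ≠ 0) (k : Fin n) :
    b 2 • ∑ j ∈ Iio k, vertexWeight v b j • v j
      = (∑ j ∈ Iio k, vertexWeight v b j) • b + (inEdge v b k - inEdge v b 0) := by
  rw [smul_sum, sum_congr rfl fun i _ => smul_vertexWeight_smul_eq hv hb i,
    sum_add_distrib, Fin.sum_Iio_sub, sum_smul]

lemma det3_inEdge_self (hb : ∀ i, det3 b (v i) (v (i + 1)) ≠ 0) (k : Fin n) :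
    det3 b (inEdge v b k) (v k) = 1 := by
  rw [inEdge, det3_smul_mid, det3_sub_mid, det3_self_right, sub_zero,
    inv_mul_cancel₀ (det3_pred_ne_zero hb k)]

end VertexWeight

theorem fiberwise_critical_point_general (n : ℕ) [NeZero n] (hn : 3 ≤ n)
    (v : Fin n → (Fin 3 → ℝ)) (hheight : ∀ i, v i 2 = 1)
    (hccw : ∀ i j k : Fin n, i < j → j < k → 0 < det3 (v i) (v j) (v k))
    (r : ℝ) (b : Fin 3 → ℝ) (hb : b 2 = r)
    (hbpos : ∀ i : Fin n, 0 < det3 b (v i) (v (i + 1)))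
    (ell : Fin n → ℝ)
    (hell : ∀ i, ell i = det3 (v (i - 1)) (v i) (v (i + 1))
      / (det3 b (v (i - 1)) (v i) * det3 b (v i) (v (i + 1))))
    (V : ℝ) (hV : V = ∑ i, ell i)
    (σ : Fin n → ℝ) (hσ : ∀ i, σ i = (r / V) * ell i) :
    (∑ i, σ i • v i = b) ∧
    (∑ j, ∑ k ∈ Finset.Ioi j, det3 b (v j) (v k) * σ j * σ k = r / V) := by
  obtain rfl : ell = vertexWeight v b := funext hell
  have hb0 (i : Fin n) : det3 b (v i) (v (i + 1)) ≠ 0 := (hbpos i).ne'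
  have hVpos : 0 < V := hV ▸ sum_pos (fun i _ => vertexWeight_pos hn hccw hbpos i) univ_nonempty
  have sum_σ_smul (s : Finset (Fin n)) :
      ∑ i ∈ s, σ i • v i = V⁻¹ • b 2 • ∑ i ∈ s, vertexWeight v b i • v i := by
    rw [smul_sum, smul_sum]
    refine sum_congr rfl fun i _ => ?_
    rw [smul_smul, smul_smul, hσ, hb, div_eq_inv_mul]
  have hfiber : ∑ i, σ i • v i = b := by
    rw [sum_σ_smul, smul_sum_vertexWeight_smul hheight hb0, ← hV, smul_smul,
      inv_mul_cancel₀ hVpos.ne', one_smul]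
  refine ⟨hfiber, ?_⟩
  have hsum : ∑ k, σ k = r := by simpa [hheight, hb] using congrFun hfiber 2
  have inner (k : Fin n) : det3 b (∑ j ∈ Iio k, σ j • v j) (v k)
      = V⁻¹ * (1 - det3 b (inEdge v b 0) (v k)) := by
    rw [sum_σ_smul, smul_sum_Iio_vertexWeight_smul hheight hb0, det3_smul_mid, det3_add_mid,
      det3_smul_mid, det3_sub_mid, det3_self_left, det3_inEdge_self hb0, mul_zero, zero_add]
  calc ∑ j, ∑ k ∈ Ioi j, det3 b (v j) (v k) * σ j * σ k
      = V⁻¹ * (∑ k, σ k - det3 b (inEdge v b 0) (∑ k, σ k • v k)) := by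
        rw [sum_Ioi_det3_mul_mul, det3_sum_smul_right, mul_sub, mul_sum, mul_sum,
          ← sum_sub_distrib]
        exact sum_congr rfl fun k _ => by rw [inner]; ring
    _ = r / V := by rw [hsum, hfiber, det3_self_outer, sub_zero, div_eq_inv_mul]

/-- With
`ℓⁱ(b) = det(vᵢ₋₁,vᵢ,vᵢ₊₁)/(det(b,vᵢ₋₁,vᵢ)·det(b,vᵢ,vᵢ₊₁))` (cyclic indices)
and `V(b) = Σᵢ ℓⁱ(b)`, the point `σ(b)` with `σⁱ(b) = (r/V(b))·ℓⁱ(b)` lies in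
the fiber `π(σ(b)) = b`, and the quadratic `Q(φ) = Σ_{j<k} det(b,vⱼ,v_k)φʲφᵏ`
takes the value `Q(σ(b)) = r/V(b)` there. -/
theorem fiberwise_critical_point (n : ℕ) [NeZero n] (hn : 3 ≤ n)
    (v : Fin n → (Fin 3 → ℝ)) (hheight : ∀ i, v i 2 = 1)
    (hccw : ∀ i j k : Fin n, i < j → j < k → 0 < det3 (v i) (v j) (v k))
    (r : ℝ) (hr : 0 < r) (b : Fin 3 → ℝ) (hb : b 2 = r)
    (hbpos : ∀ i : Fin n, 0 < det3 b (v i) (v (i + 1)))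
    (ell : Fin n → ℝ)
    (hell : ∀ i, ell i = det3 (v (i - 1)) (v i) (v (i + 1))
      / (det3 b (v (i - 1)) (v i) * det3 b (v i) (v (i + 1))))
    (V : ℝ) (hV : V = ∑ i, ell i)
    (σ : Fin n → ℝ) (hσ : ∀ i, σ i = (r / V) * ell i) :
    (∑ i, σ i • v i = b) ∧
    (∑ j, ∑ k ∈ Finset.Ioi j, det3 b (v j) (v k) * σ j * σ k = r / V) :=
  fiberwise_critical_point_general n hn v hheight hccw r b hb hbpos ell hell V hV σ hσ
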